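/- Let n, p ≥ 1 and 0 < μ ≤ G. For i = 1, …, n let H_i be a real symmetric p×p matrix with (1/G) I_p ⪯ H_i ⪯ (1/μ) I_p. Let y ∈ ℝ^{np} have blocks y_i, and let d ∈ ℝ^{np} be the vector with blocks d_i := H_i y_i; let ȳ and d̄ denote the block averages of y and d. Then ‖d − 𝟙_n⊗d̄‖² ≤ (G²/(2μ²)) ‖d‖² + (2/μ²) ‖y − 𝟙_n⊗ȳ‖². -/

import Mathlib

open scoped BigOperators

/-- Spectral (ℓ²-operator) norm of a real matrix. -/
noncomputable def specNorm {n m : ℕ} (M : Matrix (Fin n) (Fin m) ℝ) : ℝ :=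
  ‖LinearMap.toContinuousLinearMap (Matrix.toEuclideanLin M)‖

/-- ℝ^{np}, viewed as n blocks of size p, with the Euclidean norm. -/
abbrev BlockVec (n p : ℕ) : Type := PiLp 2 (fun _ : Fin n => EuclideanSpace ℝ (Fin p))

/-- Block average ā := (1/n) ∑ᵢ aᵢ. -/
noncomputable def blockAvg {n p : ℕ} (a : BlockVec n p) : EuclideanSpace ℝ (Fin p) :=
  (n : ℝ)⁻¹ • ∑ i, a i

/-- 𝟙_n ⊗ x : the block vector all of whose blocks equal x. -/
def consensus {n p : ℕ} (x : EuclideanSpace ℝ (Fin p)) : BlockVec n p := WithLp.toLp 2 (fun _ => x)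

/-- Action of W ⊗ I_p on a block vector. -/
noncomputable def kronApply {n p : ℕ} (W : Matrix (Fin n) (Fin n) ℝ) (a : BlockVec n p) :
    BlockVec n p := WithLp.toLp 2 (fun i => ∑ j, W i j • a j)

/-- The all-ones matrix J_n. -/
def onesMat (n : ℕ) : Matrix (Fin n) (Fin n) ℝ := Matrix.of fun _ _ => 1

/- ### Auxiliary lemmas -/

/-- Recast a plain vector as an element of Euclidean space. -/
noncomputable def toE {p : ℕ} (v : Fin p → ℝ) : EuclideanSpace ℝ (Fin p) :=
  (WithLp.equiv 2 (Fin p → ℝ)).symm v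

@[simp] lemma toE_apply {p : ℕ} (v : Fin p → ℝ) (j : Fin p) : toE v j = v j := rfl


open Matrix in
lemma norm_sq_eq_dot {p : ℕ} (v : EuclideanSpace ℝ (Fin p)) : ‖v‖ ^ 2 = v ⬝ᵥ v := by
  rw [EuclideanSpace.norm_sq_eq]
  simp [dotProduct, sq]

open Matrix in
lemma inner_eq_dot' {p : ℕ} (v w : EuclideanSpace ℝ (Fin p)) : (inner ℝ v w : ℝ) = v ⬝ᵥ w := by
  simp [PiLp.inner_apply, dotProduct, RCLike.inner_apply, mul_comm]

lemma dot_self_nonneg' {p : ℕ} (x : Fin p → ℝ) : (0:ℝ) ≤ dotProduct x x :=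
  Finset.sum_nonneg fun _ _ => mul_self_nonneg _

lemma psd_smul_one {p : ℕ} {c : ℝ} (hc : 0 ≤ c) :
    (c • (1 : Matrix (Fin p) (Fin p) ℝ)).PosSemidef := by
  rw [Matrix.posSemidef_iff_dotProduct_mulVec]
  constructor
  · unfold Matrix.IsHermitian
    simp
  · intro x
    rw [Matrix.smul_mulVec, Matrix.one_mulVec]
    simp only [star_trivial, dotProduct_smul, smul_eq_mul]
    exact mul_nonneg hc (dot_self_nonneg' x)

open Matrix in
lemma quad_bound {p : ℕ} (c : ℝ) (hc : 0 < c) (M : Matrix (Fin p) (Fin p) ℝ)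
    (hM : M.IsSymm)
    (h1 : (c • (1 : Matrix (Fin p) (Fin p) ℝ) - M).PosSemidef)
    (h2 : (c • (1 : Matrix (Fin p) (Fin p) ℝ) + M).PosSemidef) (x : Fin p → ℝ) :
    (M *ᵥ x) ⬝ᵥ (M *ᵥ x) ≤ c ^ 2 * (x ⬝ᵥ x) := by
  set u := M *ᵥ x with hu
  have hsymm : ∀ v : Fin p → ℝ, x ⬝ᵥ (M *ᵥ v) = u ⬝ᵥ v := by
    intro v
    rw [Matrix.dotProduct_mulVec]
    congr 1
    rw [← Matrix.mulVec_transpose, hM.eq]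
  have e1 : ∀ v : Fin p → ℝ, (c • (1 : Matrix (Fin p) (Fin p) ℝ) - M) *ᵥ v = c • v - M *ᵥ v := by
    intro v; rw [Matrix.sub_mulVec, Matrix.smul_mulVec, Matrix.one_mulVec]
  have e2 : ∀ v : Fin p → ℝ, (c • (1 : Matrix (Fin p) (Fin p) ℝ) + M) *ᵥ v = c • v + M *ᵥ v := by
    intro v; rw [Matrix.add_mulVec, Matrix.smul_mulVec, Matrix.one_mulVec]
  have q1 := h1.dotProduct_mulVec_nonneg (c • x + u)
  have q2 := h2.dotProduct_mulVec_nonneg (c • x - u)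
  rw [e1] at q1; rw [e2] at q2
  simp only [star_trivial, Matrix.mulVec_add, Matrix.mulVec_sub, Matrix.mulVec_smul] at q1 q2
  simp only [dotProduct_add, add_dotProduct, dotProduct_sub,
    sub_dotProduct, dotProduct_smul, smul_dotProduct, smul_eq_mul,
    hsymm, ← hu] at q1 q2
  have hxu : x ⬝ᵥ u = u ⬝ᵥ x := dotProduct_comm _ _
  nlinarith [q1, q2, hc]

open Matrix in
lemma norm_mulVec_le {p : ℕ} (c : ℝ) (hc : 0 < c) (M : Matrix (Fin p) (Fin p) ℝ)
    (hM : M.IsSymm)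
    (h1 : (c • (1 : Matrix (Fin p) (Fin p) ℝ) - M).PosSemidef)
    (h2 : (c • (1 : Matrix (Fin p) (Fin p) ℝ) + M).PosSemidef)
    (x : EuclideanSpace ℝ (Fin p)) :
    ‖toE (M *ᵥ x)‖ ^ 2 ≤ c ^ 2 * ‖x‖ ^ 2 := by
  rw [norm_sq_eq_dot, norm_sq_eq_dot]
  exact quad_bound c hc M hM h1 h2 x

lemma variance_identity {n p : ℕ} (u : BlockVec n p)
    (hn0 : (n : ℝ) ≠ 0)
    (c : EuclideanSpace ℝ (Fin p)) :
    ∑ i, ‖u i - c‖ ^ 2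
      = ∑ i, ‖u i - blockAvg u‖ ^ 2 + (n : ℝ) * ‖blockAvg u - c‖ ^ 2 := by
  set m := blockAvg u with hm
  have hsum : ∑ i, (u i - m) = 0 := by
    have h1 : ∑ _i : Fin n, m = (n : ℝ) • m := by
      rw [Finset.sum_const, Finset.card_univ, Fintype.card_fin, Nat.cast_smul_eq_nsmul]
    rw [Finset.sum_sub_distrib, h1, hm, blockAvg, smul_smul, mul_inv_cancel₀ hn0, one_smul,
      sub_self]
  have key : ∀ i : Fin n, ‖u i - c‖ ^ 2
      = ‖u i - m‖ ^ 2 + 2 * (inner ℝ (u i - m) (m - c) : ℝ) + ‖m - c‖ ^ 2 := by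
    intro i
    have h2 : u i - c = (u i - m) + (m - c) := by abel
    rw [h2, norm_add_sq_real]
  rw [Finset.sum_congr rfl fun i _ => key i]
  rw [Finset.sum_add_distrib, Finset.sum_add_distrib]
  have h3 : ∑ i : Fin n, 2 * (inner ℝ (u i - m) (m - c) : ℝ) = 0 := by
    rw [← Finset.mul_sum, ← sum_inner, hsum]
    simp
  rw [h3]
  simp [Finset.sum_const, mul_comm]

open Matrix in
lemma lower_bound {p : ℕ} {G : ℝ} (hG : 0 < G) (H : Matrix (Fin p) (Fin p) ℝ)
    (h : (H - G⁻¹ • 1).PosSemidef) (x : EuclideanSpace ℝ (Fin p)) :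
    ‖x‖ ^ 2 ≤ G ^ 2 * ‖toE (H *ᵥ x)‖ ^ 2 := by
  set d : EuclideanSpace ℝ (Fin p) := toE (H *ᵥ x) with hd
  have hq := h.dotProduct_mulVec_nonneg x
  rw [Matrix.sub_mulVec, Matrix.smul_mulVec, Matrix.one_mulVec] at hq
  simp only [star_trivial, dotProduct_sub, dotProduct_smul, smul_eq_mul] at hq
  have hdot : x ⬝ᵥ (H *ᵥ x) = (inner ℝ x d : ℝ) := by rw [inner_eq_dot']; rfl
  have hxx : x ⬝ᵥ x = ‖x‖ ^ 2 := by
    rw [← real_inner_self_eq_norm_sq, inner_eq_dot']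
  have hCS : (inner ℝ x d : ℝ) ≤ ‖x‖ * ‖d‖ := real_inner_le_norm x d
  rw [hdot, hxx] at hq
  have h0' : G⁻¹ * ‖x‖ ^ 2 ≤ ‖x‖ * ‖d‖ := le_trans (by linarith) hCS
  have h1 : ‖x‖ ^ 2 ≤ G * (‖x‖ * ‖d‖) := by
    have h2 := mul_le_mul_of_nonneg_left h0' hG.le
    rw [← mul_assoc, mul_inv_cancel₀ hG.ne'] at h2
    simpa using h2
  rcases eq_or_lt_of_le (norm_nonneg x) with h0 | h0
  · have hnn : (0:ℝ) ≤ G ^ 2 * ‖d‖ ^ 2 := by positivity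
    rw [← h0]
    simpa using hnn
  · have h2 : ‖x‖ ≤ G * ‖d‖ := by nlinarith
    have h3 := mul_self_le_mul_self (norm_nonneg x) h2
    nlinarith

open Matrix in
lemma block_bound {p : ℕ} {μ G : ℝ} (hμ : 0 < μ) (hμG : μ ≤ G)
    (Hm : Matrix (Fin p) (Fin p) ℝ) (hs : Hm.IsSymm)
    (hlo : (Hm - G⁻¹ • 1).PosSemidef)
    (hup : ((μ⁻¹ • (1 : Matrix (Fin p) (Fin p) ℝ)) - Hm).PosSemidef)
    (yb mb db : EuclideanSpace ℝ (Fin p)) (hdb : db = Hm *ᵥ yb) :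
    ‖db - ((μ⁻¹ + G⁻¹)/2) • mb‖ ^ 2
      ≤ 2 * μ⁻¹ ^ 2 * ‖yb - mb‖ ^ 2 + (μ⁻¹ ^ 2 / 2) * ‖mb‖ ^ 2 := by
  have hG : 0 < G := lt_of_lt_of_le hμ hμG
  set a : ℝ := (μ⁻¹ + G⁻¹)/2 with ha
  set v : EuclideanSpace ℝ (Fin p) := toE (Hm *ᵥ (yb - mb)) with hv
  set w : EuclideanSpace ℝ (Fin p) := toE ((Hm - a • 1) *ᵥ mb) with hw
  have hsplit : db - a • mb = v + w := by
    rw [hv, hw]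
    ext j
    have hdbj := congrFun hdb j
    simp only [PiLp.sub_apply, PiLp.add_apply, PiLp.smul_apply, smul_eq_mul, toE_apply, Pi.sub_apply,
      Matrix.mulVec, dotProduct, Matrix.sub_apply, Matrix.smul_apply,
      Matrix.one_apply, mul_sub, sub_mul, mul_ite, mul_one, mul_zero, ite_mul, zero_mul,
      Finset.sum_sub_distrib, Finset.sum_ite_eq, Finset.mem_univ, if_true, hdbj]
    ring
  -- bound on v
  have hup' : ((μ⁻¹ • (1 : Matrix (Fin p) (Fin p) ℝ)) + Hm).PosSemidef := by
    have e : (μ⁻¹ • (1 : Matrix (Fin p) (Fin p) ℝ)) + Hm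
        = (Hm - G⁻¹ • 1) + ((μ⁻¹ + G⁻¹) • 1) := by module
    rw [e]
    exact hlo.add (psd_smul_one (by positivity))
  have hvb : ‖v‖ ^ 2 ≤ μ⁻¹ ^ 2 * ‖yb - mb‖ ^ 2 :=
    norm_mulVec_le μ⁻¹ (by positivity) Hm hs hup hup' (yb - mb)
  -- bound on w
  have hs2 : (Hm - a • 1).IsSymm := by
    unfold Matrix.IsSymm
    rw [Matrix.transpose_sub, Matrix.transpose_smul, Matrix.transpose_one, hs.eq]
  have h1w : ((μ⁻¹/2) • (1 : Matrix (Fin p) (Fin p) ℝ) - (Hm - a • 1)).PosSemidef := by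
    have e : (μ⁻¹/2) • (1 : Matrix (Fin p) (Fin p) ℝ) - (Hm - a • 1)
        = ((μ⁻¹ • (1 : Matrix (Fin p) (Fin p) ℝ)) - Hm) + ((G⁻¹/2) • 1) := by
      rw [ha]; module
    rw [e]
    exact hup.add (psd_smul_one (by positivity))
  have h2w : ((μ⁻¹/2) • (1 : Matrix (Fin p) (Fin p) ℝ) + (Hm - a • 1)).PosSemidef := by
    have e : (μ⁻¹/2) • (1 : Matrix (Fin p) (Fin p) ℝ) + (Hm - a • 1)
        = (Hm - G⁻¹ • 1) + ((G⁻¹/2) • 1) := by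
      rw [ha]; module
    rw [e]
    exact hlo.add (psd_smul_one (by positivity))
  have hwb : ‖w‖ ^ 2 ≤ (μ⁻¹/2) ^ 2 * ‖mb‖ ^ 2 :=
    norm_mulVec_le (μ⁻¹/2) (by positivity) (Hm - a • 1) hs2 h1w h2w mb
  rw [hsplit]
  have tri := norm_add_le v w
  have tri2 := mul_self_le_mul_self (norm_nonneg (v + w)) tri
  nlinarith [sq_nonneg (‖v‖ - ‖w‖), norm_nonneg v, norm_nonneg w]

theorem stmt11
    (n p : ℕ) (hn : 1 ≤ n) (hp : 1 ≤ p)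
    (G μ : ℝ) (hμ : 0 < μ) (hμG : μ ≤ G)
    (H : Fin n → Matrix (Fin p) (Fin p) ℝ)
    (hHsymm : ∀ i, (H i).IsSymm)
    (hHlow : ∀ i, (H i - G⁻¹ • 1).PosSemidef)
    (hHup : ∀ i, ((μ⁻¹ • (1 : Matrix (Fin p) (Fin p) ℝ)) - H i).PosSemidef)
    (y d : BlockVec n p)
    (hd : ∀ i, d i = (H i).mulVec (y i)) :
    ‖d - consensus (blockAvg d)‖ ^ 2 ≤
      G ^ 2 / (2 * μ ^ 2) * ‖d‖ ^ 2
      + 2 / μ ^ 2 * ‖y - consensus (blockAvg y)‖ ^ 2 := by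
  have hG : 0 < G := lt_of_lt_of_le hμ hμG
  have hn0 : (n : ℝ) ≠ 0 := by positivity
  set my := blockAvg y with hmy
  set md := blockAvg d with hmd
  set a : ℝ := (μ⁻¹ + G⁻¹)/2 with ha
  -- norms as sums of block norms
  have hnormd : ‖d - consensus md‖ ^ 2 = ∑ i, ‖d i - md‖ ^ 2 := by
    rw [PiLp.norm_sq_eq_of_L2]
    exact Finset.sum_congr rfl fun i _ => by rw [PiLp.sub_apply]; rfl
  have hnormy : ‖y - consensus my‖ ^ 2 = ∑ i, ‖y i - my‖ ^ 2 := by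
    rw [PiLp.norm_sq_eq_of_L2]
    exact Finset.sum_congr rfl fun i _ => by rw [PiLp.sub_apply]; rfl
  have hnormd2 : ‖d‖ ^ 2 = ∑ i, ‖d i‖ ^ 2 := PiLp.norm_sq_eq_of_L2 _ d
  -- step 1 : variance bound
  have step1 : ∑ i, ‖d i - md‖ ^ 2 ≤ ∑ i, ‖d i - a • my‖ ^ 2 := by
    have hvi := variance_identity d hn0 (a • my)
    have hpos : 0 ≤ (n : ℝ) * ‖md - a • my‖ ^ 2 := by positivity
    rw [← hmd] at hvi
    linarith
  -- step 2 : per-block bound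
  have step2 : ∀ i, ‖d i - a • my‖ ^ 2
      ≤ 2 * μ⁻¹ ^ 2 * ‖y i - my‖ ^ 2 + (μ⁻¹ ^ 2 / 2) * ‖my‖ ^ 2 :=
    fun i => block_bound hμ hμG (H i) (hHsymm i) (hHlow i) (hHup i) (y i) my (d i) (hd i)
  have step2' : ∑ i, ‖d i - a • my‖ ^ 2
      ≤ 2 * μ⁻¹ ^ 2 * (∑ i, ‖y i - my‖ ^ 2) + (n : ℝ) * ((μ⁻¹ ^ 2 / 2) * ‖my‖ ^ 2) := by
    calc ∑ i, ‖d i - a • my‖ ^ 2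
        ≤ ∑ i, (2 * μ⁻¹ ^ 2 * ‖y i - my‖ ^ 2 + (μ⁻¹ ^ 2 / 2) * ‖my‖ ^ 2) :=
          Finset.sum_le_sum fun i _ => step2 i
      _ = 2 * μ⁻¹ ^ 2 * (∑ i, ‖y i - my‖ ^ 2) + (n : ℝ) * ((μ⁻¹ ^ 2 / 2) * ‖my‖ ^ 2) := by
          rw [Finset.sum_add_distrib, ← Finset.mul_sum, Finset.sum_const]
          simp [nsmul_eq_mul]
  -- step 3 : n ‖my‖² ≤ ∑ ‖y i‖² ≤ G² ∑ ‖d i‖²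
  have step3 : (n : ℝ) * ‖my‖ ^ 2 ≤ ∑ i, ‖y i‖ ^ 2 := by
    have hvi := variance_identity y hn0 (0 : EuclideanSpace ℝ (Fin p))
    have hpos : 0 ≤ ∑ i, ‖y i - blockAvg y‖ ^ 2 :=
      Finset.sum_nonneg fun i _ => sq_nonneg _
    simp only [sub_zero, ← hmy] at hvi
    linarith
  have step4 : ∑ i, ‖y i‖ ^ 2 ≤ G ^ 2 * ∑ i, ‖d i‖ ^ 2 := by
    rw [Finset.mul_sum]
    refine Finset.sum_le_sum fun i _ => ?_
    have hlb := lower_bound hG (H i) (hHlow i) (y i)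
    rw [← hd i] at hlb
    exact hlb
  -- combine
  rw [hnormd, hnormy, hnormd2]
  have hfinal : (n : ℝ) * ((μ⁻¹ ^ 2 / 2) * ‖my‖ ^ 2)
      ≤ (μ⁻¹ ^ 2 / 2) * (G ^ 2 * ∑ i, ‖d i‖ ^ 2) := by
    have h5 : (n : ℝ) * ‖my‖ ^ 2 ≤ G ^ 2 * ∑ i, ‖d i‖ ^ 2 := le_trans step3 step4
    have h6 := mul_le_mul_of_nonneg_left h5 (by positivity : (0:ℝ) ≤ μ⁻¹ ^ 2 / 2)
    calc (n : ℝ) * ((μ⁻¹ ^ 2 / 2) * ‖my‖ ^ 2)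
        = (μ⁻¹ ^ 2 / 2) * ((n : ℝ) * ‖my‖ ^ 2) := by ring
      _ ≤ (μ⁻¹ ^ 2 / 2) * (G ^ 2 * ∑ i, ‖d i‖ ^ 2) := h6
  have e1 : (μ⁻¹ ^ 2 / 2) * (G ^ 2 * ∑ i, ‖d i‖ ^ 2)
      = G ^ 2 / (2 * μ ^ 2) * ∑ i, ‖d i‖ ^ 2 := by
    ring
  have e2 : 2 * μ⁻¹ ^ 2 * (∑ i, ‖y i - my‖ ^ 2) = 2 / μ ^ 2 * ∑ i, ‖y i - my‖ ^ 2 := by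
    ring
  linarith [step1, step2', hfinal, e1.le, e2.le]
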